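/- For every integer k ≥ 1 and every θ ∈ ℝ, setting f(θ) = e_{c,k}(θ) = (cos((k+1)θ) − 1)/(k+1) − (cos(kθ) − 1)/k and v(θ) = (1 − cos((k+1)θ))/(k+1)² − (1 − cos(kθ))/k², one has (f(θ) − v(θ))·cos θ − (f′(θ) − v′(θ))·sin θ = −d⁻_{k+1}·e_{c,k+1}(θ) − (d⁻_{k+1} − d⁻_k)·e_{c,k}(θ) + d⁻_k·e_{c,k−1}(θ) + ((k² + 3k + 1)/(k²(k+1)²))·e_{c,0}(θ), where d⁻_m = (m−1)(m+1)²/(2m²) and e_{c,0}(θ) = cos θ − 1. -/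

import Mathlib

/-- The basis functions `e_{c,k}` of the weighted Sobolev space `ℋ`. -/
noncomputable def eC (k : ℕ) (θ : ℝ) : ℝ :=
  if k = 0 then Real.cos θ - 1
  else (Real.cos (((k : ℝ) + 1) * θ) - 1) / ((k : ℝ) + 1) - (Real.cos ((k : ℝ) * θ) - 1) / k

/-- The coefficients `d⁻_m = (m-1)(m+1)²/(2m²)`. -/
noncomputable def dMinus (m : ℕ) : ℝ := ((m : ℝ) - 1) * ((m : ℝ) + 1) ^ 2 / (2 * (m : ℝ) ^ 2)

private lemma hasDerivAt_cos_mul (a x : ℝ) :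
    HasDerivAt (fun t => Real.cos (a * t)) (-Real.sin (a * x) * a) x := by
  simpa [Function.comp_def] using (Real.hasDerivAt_cos (a * x)).comp x ((hasDerivAt_id x).const_mul a)

set_option maxHeartbeats 1000000
/-- Action of the operator `L⁻ f = {f - v(f), sin θ}` on `f = e_{c,k}`,
with `v(θ) = (1 - cos((k+1)θ))/(k+1)² - (1 - cos(kθ))/k²` the primitive
vanishing at `0` of `H f`. -/
theorem Lminus_on_eC (k : ℕ) (hk : 1 ≤ k) (θ : ℝ)
    (f v : ℝ → ℝ)
    (hf : f = eC k)
    (hv : v = fun x => (1 - Real.cos (((k : ℝ) + 1) * x)) / ((k : ℝ) + 1) ^ 2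
        - (1 - Real.cos ((k : ℝ) * x)) / (k : ℝ) ^ 2) :
    (f θ - v θ) * Real.cos θ - (deriv f θ - deriv v θ) * Real.sin θ
      = -dMinus (k + 1) * eC (k + 1) θ - (dMinus (k + 1) - dMinus k) * eC k θ
        + dMinus k * eC (k - 1) θ
        + (((k : ℝ) ^ 2 + 3 * (k : ℝ) + 1) / ((k : ℝ) ^ 2 * ((k : ℝ) + 1) ^ 2)) * eC 0 θ := by
  have hkne : k ≠ 0 := by omega
  have hk0 : (k : ℝ) ≠ 0 := Nat.cast_ne_zero.mpr hkne
  have hk1 : (k : ℝ) + 1 ≠ 0 := by positivity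
  have hk2 : (k : ℝ) + 2 ≠ 0 := by positivity
  have hfe : f = fun x => (Real.cos (((k : ℝ) + 1) * x) - 1) / ((k : ℝ) + 1)
      - (Real.cos ((k : ℝ) * x) - 1) / (k : ℝ) := by
    subst hf; funext x; simp [eC, hkne]
  have hdf : deriv f θ = -Real.sin (((k : ℝ) + 1) * θ) + Real.sin ((k : ℝ) * θ) := by
    rw [hfe]
    have h : HasDerivAt (fun x => (Real.cos (((k : ℝ) + 1) * x) - 1) / ((k : ℝ) + 1)
        - (Real.cos ((k : ℝ) * x) - 1) / (k : ℝ))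
        ((-Real.sin (((k : ℝ) + 1) * θ) * ((k : ℝ) + 1)) / ((k : ℝ) + 1)
          - (-Real.sin ((k : ℝ) * θ) * (k : ℝ)) / (k : ℝ)) θ :=
      (((hasDerivAt_cos_mul ((k : ℝ) + 1) θ).sub_const 1).div_const _).sub
        (((hasDerivAt_cos_mul (k : ℝ) θ).sub_const 1).div_const _)
    rw [h.deriv]
    field_simp
    ring
  have hdv : deriv v θ = Real.sin (((k : ℝ) + 1) * θ) / ((k : ℝ) + 1)
      - Real.sin ((k : ℝ) * θ) / (k : ℝ) := by
    rw [hv]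
    have h : HasDerivAt (fun x => (1 - Real.cos (((k : ℝ) + 1) * x)) / ((k : ℝ) + 1) ^ 2
        - (1 - Real.cos ((k : ℝ) * x)) / (k : ℝ) ^ 2)
        ((-(-Real.sin (((k : ℝ) + 1) * θ) * ((k : ℝ) + 1))) / ((k : ℝ) + 1) ^ 2
          - (-(-Real.sin ((k : ℝ) * θ) * (k : ℝ))) / (k : ℝ) ^ 2) θ :=
      (((hasDerivAt_cos_mul ((k : ℝ) + 1) θ).const_sub 1).div_const _).sub
        (((hasDerivAt_cos_mul (k : ℝ) θ).const_sub 1).div_const _)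
    rw [h.deriv]
    field_simp
  rw [hdf, hdv, hfe, hv]
  beta_reduce
  have E0 : eC 0 θ = Real.cos θ - 1 := by simp [eC]
  have Ek : eC k θ = (Real.cos (((k : ℝ) + 1) * θ) - 1) / ((k : ℝ) + 1)
      - (Real.cos ((k : ℝ) * θ) - 1) / (k : ℝ) := by simp [eC, hkne]
  have Ek1 : eC (k + 1) θ = (Real.cos (((k : ℝ) + 2) * θ) - 1) / ((k : ℝ) + 2)
      - (Real.cos (((k : ℝ) + 1) * θ) - 1) / ((k : ℝ) + 1) := by
    simp only [eC, Nat.add_eq_zero, and_false, if_false, one_ne_zero]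
    push_cast
    ring_nf
  have Edk1 : dMinus (k + 1) = (k : ℝ) * ((k : ℝ) + 2) ^ 2 / (2 * ((k : ℝ) + 1) ^ 2) := by
    simp only [dMinus]; push_cast; ring_nf
  have Edk : dMinus k = ((k : ℝ) - 1) * ((k : ℝ) + 1) ^ 2 / (2 * (k : ℝ) ^ 2) := rfl
  rw [E0, Ek, Ek1, Edk1, Edk]
  rcases Nat.lt_or_ge k 2 with h2 | h2
  · -- k = 1
    have hk1' : k = 1 := by omega
    subst hk1'
    have Em : eC (1 - 1) θ = Real.cos θ - 1 := by simp [eC]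
    rw [Em]
    norm_num
    have e3 : (3 : ℝ) * θ = θ + θ + θ := by ring
    have e2 : (2 : ℝ) * θ = θ + θ := by ring
    rw [e3, e2]
    simp only [Real.cos_add, Real.sin_add]
    field_simp
    ring_nf
    rw [Real.sin_sq]
    ring
  · -- k ≥ 2
    have hkm : ((k - 1 : ℕ) : ℝ) = (k : ℝ) - 1 := by
      push_cast [Nat.cast_sub hk]; ring
    have hkm0 : k - 1 ≠ 0 := by omega
    have hkm1 : (k : ℝ) - 1 ≠ 0 := by
      have : (2 : ℝ) ≤ (k : ℝ) := by exact_mod_cast h2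
      linarith
    have Em : eC (k - 1) θ = (Real.cos ((k : ℝ) * θ) - 1) / (k : ℝ)
        - (Real.cos (((k : ℝ) - 1) * θ) - 1) / ((k : ℝ) - 1) := by
      simp only [eC, hkm0, if_false, hkm]
      ring_nf
    rw [Em]
    have e2 : ((k : ℝ) + 2) * θ = (k : ℝ) * θ + θ + θ := by ring
    have e1 : ((k : ℝ) + 1) * θ = (k : ℝ) * θ + θ := by ring
    have em1 : ((k : ℝ) - 1) * θ = (k : ℝ) * θ - θ := by ring
    rw [e2, e1, em1]
    simp only [Real.cos_add, Real.sin_add, Real.cos_sub]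
    field_simp
    ring_nf
    rw [Real.sin_sq]
    ring
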